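/- arXiv:1605.00912 — 2 statements merged into one kernel-verified Lean document; each statement's English description precedes it below -/
import Mathlib

section
/- Probabilistic null-space property: If U ⊆ ℝ^m is a nonempty set whose lower modified Minkowski dimension is strictly less than n, then for Lebesgue almost all matrices A ∈ ℝ^{n×m}, the kernel of A intersects U \ {0} in the empty set, i.e., ker(A) ∩ (U \ {0}) = ∅. -/
open MeasureTheory Filter Set Metric Bornology Matrix Pointwise
noncomputable def coveringNumber {E : Type*} [PseudoMetricSpace E] (U : Set E) (ρ : ℝ) : ℕ :=
  sInf {k : ℕ | ∃ t : Finset E, t.card = k ∧ U ⊆ ⋃ x ∈ t, Metric.ball x ρ}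

noncomputable def lowerMinkDim {E : Type*} [PseudoMetricSpace E] (U : Set E) : ℝ :=
  liminf (fun ρ : ℝ => Real.log (coveringNumber U ρ) / Real.log (1 / ρ)) (nhdsWithin 0 (Set.Ioi 0))

noncomputable def upperMinkDim {E : Type*} [PseudoMetricSpace E] (U : Set E) : ℝ :=
  limsup (fun ρ : ℝ => Real.log (coveringNumber U ρ) / Real.log (1 / ρ)) (nhdsWithin 0 (Set.Ioi 0))

def IsDimCover {E : Type*} [PseudoMetricSpace E] [MeasurableSpace E] (U : Set E) (V : ℕ → Set E) : Prop :=
  (∀ i, (V i).Nonempty ∧ IsBounded (V i) ∧ MeasurableSet (V i)) ∧ U ⊆ ⋃ i, V i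

noncomputable def lowerModMinkDim {E : Type*} [PseudoMetricSpace E] [MeasurableSpace E] (U : Set E) : ℝ :=
  sInf {d : ℝ | ∃ V : ℕ → Set E, IsDimCover U V ∧ d = ⨆ i, lowerMinkDim (V i)}

noncomputable def upperModMinkDim {E : Type*} [PseudoMetricSpace E] [MeasurableSpace E] (U : Set E) : ℝ :=
  sInf {d : ℝ | ∃ V : ℕ → Set E, IsDimCover U V ∧ d = ⨆ i, upperMinkDim (V i)}
noncomputable def matVec {n m : ℕ} (A : Fin n → Fin m → ℝ) (x : EuclideanSpace ℝ (Fin m)) :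
    EuclideanSpace ℝ (Fin n) :=
  (EuclideanSpace.equiv (Fin n) ℝ).symm (Matrix.mulVec (Matrix.of A) (EuclideanSpace.equiv (Fin m) ℝ x))

/-!
Cover `U` by bounded pieces `V i` of lower Minkowski dimension `< d < n` and cut out a
neighbourhood of `0`, leaving pieces `W` with `δ ≤ ‖x‖` on `W`. If `A x = 0` for some `x ∈ W`
lying in a ball `B(c, ρ)` of a minimal `ρ`-cover of `W`, then every row of `A` lies in the slab
`|a ⬝ᵥ c| ≤ O(ρ)`, whose intersection with a cube has volume `O(ρ / ‖c‖) = O(ρ / δ)`.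
Hence the matrices with bounded entries annihilating a point of `W` have measure at most
`N_W(ρ) · O(ρ)^n ≤ O(ρ^(n - d))` for arbitrarily small `ρ`, that is, measure zero; countably
many pieces and entry bounds keep the exceptional set null.
-/

open scoped ENNReal Topology
open Module (finrank)

theorem eventually_mem_Ioo_zero_one : ∀ᶠ ρ in 𝓝[>] (0 : ℝ), ρ ∈ Ioo 0 1 :=
  Ioo_mem_nhdsGT one_pos

theorem Bornology.IsBounded.totallyBounded {α : Type*} [PseudoMetricSpace α] [ProperSpace α]
    {s : Set α} (hs : IsBounded s) : TotallyBounded s :=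
  hs.isCompact_closure.totallyBounded.subset subset_closure

theorem tendsto_log_one_div_nhdsGT_zero :
    Tendsto (fun ρ : ℝ => Real.log (1 / ρ)) (𝓝[>] 0) atTop := by
  simpa only [Function.comp_def, one_div, Real.log_inv] using
    tendsto_neg_atBot_atTop.comp Real.tendsto_log_nhdsGT_zero

section CoveringNumber

variable {E : Type*} [PseudoMetricSpace E] {U V : Set E} {ρ d M : ℝ}

theorem coveringNumber_le_card {t : Finset E} (h : U ⊆ ⋃ x ∈ t, ball x ρ) :
    coveringNumber U ρ ≤ t.card :=
  Nat.sInf_le ⟨t, rfl, h⟩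

theorem exists_finset_card_eq_coveringNumber (hU : TotallyBounded U) (hρ : 0 < ρ) :
    ∃ t : Finset E, t.card = coveringNumber U ρ ∧ U ⊆ ⋃ x ∈ t, ball x ρ := by
  obtain ⟨t, ht, hUt⟩ := Metric.totallyBounded_iff.1 hU ρ hρ
  exact Nat.sInf_mem (s := {k | ∃ t : Finset E, t.card = k ∧ U ⊆ ⋃ x ∈ t, ball x ρ})
    ⟨_, ht.toFinset, rfl, by simpa using hUt⟩

theorem coveringNumber_mono (h : U ⊆ V) (hV : TotallyBounded V) (hρ : 0 < ρ) :
    coveringNumber U ρ ≤ coveringNumber V ρ := by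
  obtain ⟨t, ht, hVt⟩ := exists_finset_card_eq_coveringNumber hV hρ
  exact ht ▸ coveringNumber_le_card (h.trans hVt)

/-- `lowerMinkDim U` is, definitionally, the `liminf` of `minkRatio U` as `ρ → 0⁺`. -/
noncomputable def minkRatio (U : Set E) (ρ : ℝ) : ℝ :=
  Real.log (coveringNumber U ρ) / Real.log (1 / ρ)

theorem eventually_minkRatio_nonneg (U : Set E) : ∀ᶠ ρ in 𝓝[>] 0, 0 ≤ minkRatio U ρ := by
  filter_upwards [eventually_mem_Ioo_zero_one] with ρ hρ
  exact div_nonneg (Real.log_natCast_nonneg _)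
    (Real.log_nonneg ((one_le_div hρ.1).2 hρ.2.le))

theorem lowerMinkDim_le_of_eventually_le (h : ∀ᶠ ρ in 𝓝[>] 0, minkRatio U ρ ≤ M) :
    lowerMinkDim U ≤ M :=
  liminf_le_of_frequently_le h.frequently
    (isBoundedUnder_of_eventually_ge (eventually_minkRatio_nonneg U))

theorem frequently_minkRatio_lt (hM : ∀ᶠ ρ in 𝓝[>] 0, minkRatio U ρ ≤ M)
    (h : lowerMinkDim U < d) : ∃ᶠ ρ in 𝓝[>] 0, minkRatio U ρ < d :=
  frequently_lt_of_liminf_lt (isCoboundedUnder_ge_of_eventually_le _ hM) h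

theorem coveringNumber_le_rpow_of_minkRatio_lt (hρ : ρ ∈ Ioo 0 1) (h : minkRatio U ρ < d) :
    (coveringNumber U ρ : ℝ) ≤ ρ ^ (-d) := by
  rcases Nat.eq_zero_or_pos (coveringNumber U ρ) with h0 | h0
  · rw [h0, Nat.cast_zero]
    exact (Real.rpow_pos_of_pos hρ.1 _).le
  have hlog : 0 < Real.log (1 / ρ) := Real.log_pos ((one_lt_div hρ.1).2 hρ.2)
  have : Real.log (coveringNumber U ρ) < Real.log (ρ ^ (-d)) := by
    rw [Real.log_rpow hρ.1, neg_mul, ← mul_neg, ← Real.log_inv, ← one_div]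
    exact (div_lt_iff₀ hlog).1 h
  exact ((Real.log_lt_log_iff (by exact_mod_cast h0) (Real.rpow_pos_of_pos hρ.1 _)).1 this).le

end CoveringNumber

section FiniteDimensional

variable {E : Type*} [NormedAddCommGroup E] [NormedSpace ℝ E] [FiniteDimensional ℝ E]
  {U : Set E} {r ρ d : ℝ}

theorem card_le_of_pairwise_le_dist {t : Finset E} (hr : 0 ≤ r) (hρ : 0 < ρ)
    (ht : ↑t ⊆ closedBall (0 : E) r) (hsep : (t : Set E).Pairwise fun x y => ρ ≤ dist x y) :
    (t.card : ℝ) ≤ ((2 * r + ρ) / ρ) ^ finrank ℝ E := by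
  borelize E
  set μ : Measure E := Measure.addHaar
  have hdisj : (t : Set E).PairwiseDisjoint fun x => ball x (ρ / 2) :=
    hsep.mono' fun x y h => ball_disjoint_ball (by linarith)
  have hsub : ⋃ x ∈ t, ball x (ρ / 2) ⊆ ball 0 (r + ρ / 2) := by
    refine iUnion₂_subset fun x hx => ball_subset_ball' ?_
    have := ht hx
    rw [mem_closedBall, dist_zero_right] at this
    rw [dist_zero_right]; linarith
  have hvol : (t.card : ℝ≥0∞) * ENNReal.ofReal ((ρ / 2) ^ finrank ℝ E) * μ (ball 0 1)
      ≤ ENNReal.ofReal ((r + ρ / 2) ^ finrank ℝ E) * μ (ball 0 1) := by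
    calc (t.card : ℝ≥0∞) * ENNReal.ofReal ((ρ / 2) ^ finrank ℝ E) * μ (ball 0 1)
        = μ (⋃ x ∈ t, ball x (ρ / 2)) := by
          rw [measure_biUnion_finset hdisj fun _ _ => measurableSet_ball,
            Finset.sum_congr rfl fun x _ => μ.addHaar_ball_of_pos x (half_pos hρ),
            Finset.sum_const, nsmul_eq_mul, mul_assoc]
      _ ≤ μ (ball 0 (r + ρ / 2)) := measure_mono hsub
      _ = _ := μ.addHaar_ball_of_pos 0 (by positivity)
  rw [ENNReal.mul_le_mul_iff_left (measure_ball_pos μ 0 one_pos).ne' measure_ball_lt_top.ne,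
    ← ENNReal.ofReal_natCast, ← ENNReal.ofReal_mul (Nat.cast_nonneg _),
    ENNReal.ofReal_le_ofReal_iff (by positivity)] at hvol
  calc (t.card : ℝ) ≤ (r + ρ / 2) ^ finrank ℝ E / (ρ / 2) ^ finrank ℝ E :=
        (le_div_iff₀ (by positivity)).2 hvol
    _ = ((2 * r + ρ) / ρ) ^ finrank ℝ E := by
        rw [← div_pow]; congr 1; field_simp

theorem coveringNumber_le_of_subset_closedBall (hr : 0 ≤ r) (hρ : 0 < ρ)
    (hU : U ⊆ closedBall (0 : E) r) :
    (coveringNumber U ρ : ℝ) ≤ ((2 * r + ρ) / ρ) ^ finrank ℝ E := by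
  classical
  set K := ((2 * r + ρ) / ρ) ^ finrank ℝ E
  let IsPacking : ℕ → Prop := fun k => ∃ t : Finset E, ↑t ⊆ U ∧
    (t : Set E).Pairwise (fun x y => ρ ≤ dist x y) ∧ t.card = k
  have hbound : ∀ k, IsPacking k → k ≤ ⌊K⌋₊ := by
    rintro _ ⟨t, htU, hsep, rfl⟩
    exact Nat.le_floor (card_le_of_pairwise_le_dist hr hρ (htU.trans hU) hsep)
  obtain ⟨t, htU, hsep, htcard⟩ : IsPacking (Nat.findGreatest IsPacking ⌊K⌋₊) :=
    Nat.findGreatest_spec (Nat.zero_le _) ⟨∅, by simp, by simp, rfl⟩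
  -- a packing of maximal cardinality is a cover: an uncovered point could be added to it
  have hcover : U ⊆ ⋃ x ∈ t, ball x ρ := by
    intro w hw
    by_contra hwt
    simp only [mem_iUnion, mem_ball, not_exists, not_lt] at hwt
    have hwt' : w ∉ t := fun h => (hwt w h).not_gt (by simpa using hρ)
    have hins : IsPacking (t.card + 1) := by
      refine ⟨insert w t, ?_, ?_, Finset.card_insert_of_notMem hwt'⟩
      · simpa [Finset.coe_insert] using insert_subset hw htU
      · rw [Finset.coe_insert]
        exact hsep.insert fun x hx _ => ⟨hwt x hx, dist_comm x w ▸ hwt x hx⟩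
    have := Nat.le_findGreatest (hbound _ hins) hins
    omega
  calc (coveringNumber U ρ : ℝ) ≤ t.card := by exact_mod_cast coveringNumber_le_card hcover
    _ ≤ K := card_le_of_pairwise_le_dist hr hρ (htU.trans hU) hsep

theorem eventually_minkRatio_le_finrank_add_one (hU : IsBounded U) :
    ∀ᶠ ρ in 𝓝[>] 0, minkRatio U ρ ≤ finrank ℝ E + 1 := by
  obtain ⟨r, hr, hUr⟩ := hU.subset_closedBall_lt 0 0
  set D : ℝ := (finrank ℝ E : ℝ)
  filter_upwards [eventually_mem_Ioo_zero_one,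
    tendsto_log_one_div_nhdsGT_zero.eventually_ge_atTop (D * Real.log (2 * r + 1))]
    with ρ ⟨hρ0, hρ1⟩ hρlog
  have hlog : 0 < Real.log (1 / ρ) := Real.log_pos ((one_lt_div hρ0).2 hρ1)
  have hN :
      Real.log (coveringNumber U ρ) ≤ D * Real.log (2 * r + 1) + D * Real.log (1 / ρ) := by
    have hC : 1 ≤ (2 * r + 1) / ρ := by rw [le_div_iff₀ hρ0]; linarith
    have hcov : (coveringNumber U ρ : ℝ) ≤ ((2 * r + 1) / ρ) ^ finrank ℝ E :=
      (coveringNumber_le_of_subset_closedBall hr.le hρ0 hUr).trans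
        (pow_le_pow_left₀ (by positivity) (by gcongr) _)
    calc Real.log (coveringNumber U ρ) ≤ Real.log (((2 * r + 1) / ρ) ^ finrank ℝ E) := by
          rcases Nat.eq_zero_or_pos (coveringNumber U ρ) with h0 | h0
          · rw [h0, Nat.cast_zero, Real.log_zero]
            exact Real.log_nonneg (one_le_pow₀ hC)
          · exact Real.log_le_log (by exact_mod_cast h0) hcov
      _ = _ := by
          rw [Real.log_pow, div_eq_mul_one_div, Real.log_mul (by positivity) (by positivity)]
          ring
  rw [minkRatio, div_le_iff₀ hlog]
  linarith

theorem lowerMinkDim_le_finrank_add_one (hU : IsBounded U) :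
    lowerMinkDim U ≤ finrank ℝ E + 1 :=
  lowerMinkDim_le_of_eventually_le (eventually_minkRatio_le_finrank_add_one hU)

theorem frequently_coveringNumber_le_rpow {V : Set E} (hUV : U ⊆ V) (hV : IsBounded V)
    (h : lowerMinkDim V < d) : ∃ᶠ ρ in 𝓝[>] 0, (coveringNumber U ρ : ℝ) ≤ ρ ^ (-d) := by
  have hfreq := frequently_minkRatio_lt (eventually_minkRatio_le_finrank_add_one hV) h
  refine (hfreq.and_eventually eventually_mem_Ioo_zero_one).mono fun ρ ⟨hlt, hρ⟩ => ?_
  exact (Nat.cast_le.2 (coveringNumber_mono hUV hV.totallyBounded hρ.1)).trans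
    (coveringNumber_le_rpow_of_minkRatio_lt hρ hlt)

theorem exists_isDimCover_forall_lowerMinkDim_lt [MeasurableSpace E] [OpensMeasurableSpace E]
    {D : ℝ} (h : lowerModMinkDim U < D) :
    ∃ V : ℕ → Set E, IsDimCover U V ∧ ∃ d < D, ∀ i, lowerMinkDim (V i) < d := by
  have hballs : IsDimCover U fun i : ℕ => ball (0 : E) (i + 1) := by
    refine ⟨fun i => ⟨nonempty_ball.2 (by positivity), isBounded_ball, measurableSet_ball⟩,
      fun x _ => mem_iUnion.2 ?_⟩
    obtain ⟨i, hi⟩ := exists_nat_gt ‖x‖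
    exact ⟨i, by rw [mem_ball, dist_zero_right]; linarith⟩
  obtain ⟨_, ⟨V, hV, rfl⟩, hlt⟩ := exists_lt_of_csInf_lt (by exact ⟨_, _, hballs, rfl⟩) h
  have hbdd : BddAbove (range fun i => lowerMinkDim (V i)) :=
    ⟨finrank ℝ E + 1, forall_mem_range.2 fun i => lowerMinkDim_le_finrank_add_one (hV.1 i).2.1⟩
  exact ⟨V, hV, ((⨆ i, lowerMinkDim (V i)) + D) / 2, by linarith,
    fun i => by linarith [le_ciSup hbdd i]⟩

end FiniteDimensional

section Slab

variable {ι : Type*} [Fintype ι]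

def slabInCube (c : ι → ℝ) (ε R : ℝ) : Set (ι → ℝ) :=
  {a | |a ⬝ᵥ c| ≤ ε ∧ ∀ k, |a k| ≤ R}

theorem volume_slabInCube_le [DecidableEq ι] (c : ι → ℝ) {j : ι} (hc : c j ≠ 0) {ε R : ℝ}
    (hε : 0 ≤ ε) (hR : 0 ≤ R) :
    volume (slabInCube c ε R) ≤
      ENNReal.ofReal (2 * ε / |c j| * (2 * R) ^ (Fintype.card ι - 1)) := by
  set T : (ι → ℝ) →ₗ[ℝ] ι → ℝ := Matrix.toLin' ((1 : Matrix ι ι ℝ).updateRow j c)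
  have hT : ∀ a, T a = Function.update a j (c ⬝ᵥ a) := fun a => by
    simp [T, Matrix.toLin'_apply, Matrix.updateRow_mulVec]
  have hdet : LinearMap.det T = c j := by
    have hsum : c = ∑ k, c k • (1 : Matrix ι ι ℝ) k := by
      ext l; simp [Matrix.one_apply]
    rw [LinearMap.det_toLin', hsum, Matrix.det_updateRow_sum, Matrix.det_one, smul_eq_mul,
      mul_one, ← hsum]
  set I : ι → Set ℝ := Function.update (fun _ => Icc (-R) R) j (Icc (-ε) ε)
  have hsub : slabInCube c ε R ⊆ T ⁻¹' univ.pi I := by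
    rintro a ⟨hac, ha⟩ k -
    rw [hT]
    rcases eq_or_ne k j with rfl | hk
    · simpa [I, dotProduct_comm c a] using abs_le.1 hac
    · simpa [I, hk] using abs_le.1 (ha k)
  have hI : ∏ k, volume (I k) =
      ENNReal.ofReal (2 * ε) * ENNReal.ofReal (2 * R) ^ (Fintype.card ι - 1) := by
    have hIk : ∀ k ∈ ({j}ᶜ : Finset ι), volume (I k) = ENNReal.ofReal (2 * R) := fun k hk => by
      simp [I, Function.update_of_ne (by simpa using hk : k ≠ j), Real.volume_Icc, two_mul]
    rw [Fintype.prod_eq_mul_prod_compl j, Finset.prod_congr rfl hIk]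
    simp [I, Real.volume_Icc, Finset.card_compl, two_mul]
  calc volume (slabInCube c ε R) ≤ volume (T ⁻¹' univ.pi I) := measure_mono hsub
    _ = ENNReal.ofReal |(LinearMap.det T)⁻¹| * ∏ k, volume (I k) := by
        rw [Measure.addHaar_preimage_linearMap _ (hdet ▸ hc), volume_pi_pi]
    _ = _ := by
        rw [hI, hdet, ← ENNReal.ofReal_pow (by positivity), ← ENNReal.ofReal_mul (by positivity),
          ← ENNReal.ofReal_mul (by positivity), abs_inv]
        ring_nf

theorem exists_norm_le_sqrt_card_mul_abs [Nonempty ι] (c : EuclideanSpace ℝ ι) :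
    ∃ j, ‖c‖ ≤ √(Fintype.card ι) * |c j| := by
  obtain ⟨j, -, hj⟩ :=
    Finset.exists_max_image Finset.univ (fun k => |c k|) Finset.univ_nonempty
  refine ⟨j, ?_⟩
  rw [EuclideanSpace.norm_eq, ← Real.sqrt_sq (abs_nonneg (c j)),
    ← Real.sqrt_mul (Nat.cast_nonneg _)]
  refine Real.sqrt_le_sqrt ?_
  calc ∑ k, ‖c k‖ ^ 2 ≤ ∑ _k : ι, |c j| ^ 2 :=
        Finset.sum_le_sum fun k hk => pow_le_pow_left₀ (norm_nonneg _) (hj k hk) 2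
    _ = _ := by simp

theorem abs_dotProduct_le (a : ι → ℝ) (y : EuclideanSpace ℝ ι) {L : ℝ} (ha : ∀ k, |a k| ≤ L) :
    |a ⬝ᵥ y.ofLp| ≤ Fintype.card ι * L * ‖y‖ := by
  calc |a ⬝ᵥ y.ofLp| ≤ ∑ k, |a k| * |y k| := by
        simpa only [dotProduct, abs_mul] using
          Finset.abs_sum_le_sum_abs (fun k => a k * y k) Finset.univ
    _ ≤ ∑ _k : ι, L * ‖y‖ := Finset.sum_le_sum fun k _ =>
        mul_le_mul (ha k) (PiLp.norm_apply_le y k) (abs_nonneg _) ((abs_nonneg _).trans (ha k))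
    _ = _ := by simp [mul_assoc]

theorem volume_slabInCube_le_of_le_norm (c : EuclideanSpace ℝ ι) {η ε R : ℝ} (hη : 0 < η)
    (hc : η ≤ ‖c‖) (hε : 0 ≤ ε) (hR : 0 ≤ R) :
    volume (slabInCube c.ofLp ε R) ≤
      ENNReal.ofReal (2 * ε * √(Fintype.card ι) / η * (2 * R) ^ (Fintype.card ι - 1)) := by
  classical
  have : Nonempty ι := by
    by_contra h
    rw [not_nonempty_iff] at h
    linarith [norm_eq_zero.2 (Subsingleton.elim c 0)]
  obtain ⟨j, hj⟩ := exists_norm_le_sqrt_card_mul_abs c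
  have hcj : η / √(Fintype.card ι) ≤ |c j| := by
    rw [div_le_iff₀' (Real.sqrt_pos.2 (by exact_mod_cast Fintype.card_pos))]
    linarith
  have hcj0 : 0 < |c j| := lt_of_lt_of_le (by positivity) hcj
  refine (volume_slabInCube_le c.ofLp (abs_pos.1 hcj0) hε hR).trans
    (ENNReal.ofReal_le_ofReal ?_)
  refine mul_le_mul_of_nonneg_right ?_ (by positivity)
  calc 2 * ε / |c j| ≤ 2 * ε / (η / √(Fintype.card ι)) := by gcongr
    _ = 2 * ε * √(Fintype.card ι) / η := by field_simp

theorem volume_setOf_forall_apply_mem {κ : Type*} [Fintype κ] (S : Set (ι → ℝ)) :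
    volume {A : κ → ι → ℝ | ∀ i, A i ∈ S} = volume S ^ Fintype.card κ := by
  rw [show {A : κ → ι → ℝ | ∀ i, A i ∈ S} = univ.pi fun _ => S by ext; simp, volume_pi_pi,
    Finset.prod_const, Finset.card_univ]

end Slab

theorem matVec_eq_zero_iff {n m : ℕ} {A : Fin n → Fin m → ℝ} {x : EuclideanSpace ℝ (Fin m)} :
    matVec A x = 0 ↔ ∀ i, A i ⬝ᵥ x.ofLp = 0 := by
  simp only [matVec, PiLp.continuousLinearEquiv_symm_apply, WithLp.toLp_eq_zero, funext_iff,
    mulVec, of_apply, Pi.zero_apply]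
  exact Iff.rfl

section Kernel

variable {n m : ℕ} {W : Set (EuclideanSpace ℝ (Fin m))} {δ d L : ℝ}

variable (n W L) in
def boundedAnnihilators : Set (Fin n → Fin m → ℝ) :=
  {A | (∀ i j, |A i j| ≤ L) ∧ ∃ x ∈ W, matVec A x = 0}

theorem exists_volume_boundedAnnihilators_le (hW : TotallyBounded W) (hδ : 0 < δ)
    (hWδ : ∀ x ∈ W, δ ≤ ‖x‖) (hL : 0 ≤ L) :
    ∃ B : ℝ, 0 ≤ B ∧ ∀ ρ, 0 < ρ → 2 * ρ ≤ δ →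
      volume (boundedAnnihilators n W L) ≤ coveringNumber W ρ * ENNReal.ofReal (B * ρ) ^ n := by
  classical
  set B := 4 * m * L * √m / δ * (2 * L) ^ (m - 1) with hB
  refine ⟨B, by positivity, fun ρ hρ hρδ => ?_⟩
  obtain ⟨t, htcard, hWt⟩ := exists_finset_card_eq_coveringNumber hW hρ
  -- only centres of norm `≥ δ / 2` are needed, since `W` stays at distance `δ` from `0`
  set t' := t.filter fun c => δ / 2 ≤ ‖c‖
  let S : EuclideanSpace ℝ (Fin m) → Set (Fin n → Fin m → ℝ) :=
    fun c => {A | ∀ i, A i ∈ slabInCube c.ofLp (m * L * ρ) L}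
  have hsub : boundedAnnihilators n W L ⊆ ⋃ c ∈ t', S c := by
    rintro A ⟨hAL, x, hxW, hAx⟩
    obtain ⟨c, hct, hxc⟩ := mem_iUnion₂.1 (hWt hxW)
    rw [mem_ball, dist_eq_norm] at hxc
    have hc : δ / 2 ≤ ‖c‖ := by
      linarith [hWδ x hxW, norm_sub_norm_le x c]
    refine mem_iUnion₂.2 ⟨c, Finset.mem_filter.2 ⟨hct, hc⟩, fun i => ⟨?_, hAL i⟩⟩
    have hrow : A i ⬝ᵥ c.ofLp = A i ⬝ᵥ (c - x).ofLp := by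
      rw [WithLp.ofLp_sub, dotProduct_sub, matVec_eq_zero_iff.1 hAx i, sub_zero]
    calc |A i ⬝ᵥ c.ofLp| = |A i ⬝ᵥ (c - x).ofLp| := by rw [hrow]
      _ ≤ m * L * ‖c - x‖ := by simpa using abs_dotProduct_le (A i) (c - x) (hAL i)
      _ ≤ m * L * ρ := by gcongr; rw [norm_sub_rev]; exact hxc.le
  have hS : ∀ c ∈ t', volume (S c) ≤ ENNReal.ofReal (B * ρ) ^ n := by
    intro c hc
    rw [volume_setOf_forall_apply_mem, Fintype.card_fin]
    gcongr
    refine (volume_slabInCube_le_of_le_norm c (half_pos hδ) (Finset.mem_filter.1 hc).2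
      (by positivity : (0 : ℝ) ≤ m * L * ρ) hL).trans_eq ?_
    rw [Fintype.card_fin, hB]
    congr 1
    field_simp
    ring
  calc volume (boundedAnnihilators n W L) ≤ ∑ c ∈ t', volume (S c) :=
        (measure_mono hsub).trans (measure_biUnion_finset_le _ _)
    _ ≤ t'.card * ENNReal.ofReal (B * ρ) ^ n := by
        simpa using Finset.sum_le_card_nsmul _ _ _ hS
    _ ≤ _ := by
        gcongr
        exact htcard ▸ Finset.card_filter_le _ _

theorem volume_boundedAnnihilators_eq_zero (hW : TotallyBounded W) (hδ : 0 < δ)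
    (hWδ : ∀ x ∈ W, δ ≤ ‖x‖) (hdn : d < n)
    (hfreq : ∃ᶠ ρ in 𝓝[>] 0, (coveringNumber W ρ : ℝ) ≤ ρ ^ (-d)) (hL : 0 ≤ L) :
    volume (boundedAnnihilators n W L) = 0 := by
  obtain ⟨B, hB, hvol⟩ := exists_volume_boundedAnnihilators_le (n := n) hW hδ hWδ hL
  have hlim : Tendsto (fun ρ : ℝ => ENNReal.ofReal (B ^ n * ρ ^ ((n : ℝ) - d))) (𝓝[>] 0)
      (𝓝 0) := by
    have h : Tendsto (fun ρ : ℝ => B ^ n * ρ ^ ((n : ℝ) - d)) (𝓝[>] 0)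
        (𝓝 (B ^ n * 0 ^ ((n : ℝ) - d))) :=
      ((Real.continuousAt_rpow_const 0 _ (Or.inr (by linarith))).tendsto.const_mul _).mono_left
        nhdsWithin_le_nhds
    rw [Real.zero_rpow (by linarith), mul_zero] at h
    simpa using ENNReal.tendsto_ofReal h
  refine nonpos_iff_eq_zero.1 (ge_of_tendsto_of_frequently hlim ?_)
  refine (hfreq.and_eventually (Ioo_mem_nhdsGT (half_pos hδ))).mono fun ρ ⟨hN, hρ0, hρδ⟩ => ?_
  calc volume (boundedAnnihilators n W L)
      ≤ coveringNumber W ρ * ENNReal.ofReal (B * ρ) ^ n := hvol ρ hρ0 (by linarith)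
    _ ≤ ENNReal.ofReal (ρ ^ (-d)) * ENNReal.ofReal (B * ρ) ^ n := by
        gcongr
        exact ENNReal.ofReal_natCast (coveringNumber W ρ) ▸ ENNReal.ofReal_le_ofReal hN
    _ = ENNReal.ofReal (B ^ n * ρ ^ ((n : ℝ) - d)) := by
        rw [← ENNReal.ofReal_pow (by positivity), ← ENNReal.ofReal_mul (by positivity), mul_pow,
          Real.rpow_sub hρ0, Real.rpow_neg hρ0.le, Real.rpow_natCast]
        ring_nf

theorem ae_forall_matVec_ne_zero {V : Set (EuclideanSpace ℝ (Fin m))} (hWV : W ⊆ V)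
    (hV : IsBounded V) (hVd : lowerMinkDim V < d) (hdn : d < n) (hδ : 0 < δ)
    (hWδ : ∀ x ∈ W, δ ≤ ‖x‖) :
    ∀ᵐ A : Fin n → Fin m → ℝ, ∀ x ∈ W, matVec A x ≠ 0 := by
  have hnull := fun L : ℕ => measure_eq_zero_iff_ae_notMem.1 <|
    volume_boundedAnnihilators_eq_zero (hV.subset hWV).totallyBounded hδ hWδ hdn
      (frequently_coveringNumber_le_rpow hWV hV hVd) (Nat.cast_nonneg L)
  filter_upwards [ae_all_iff.2 hnull] with A hA x hx hAx
  obtain ⟨L, hL⟩ := exists_nat_ge ‖A‖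
  refine hA L ⟨fun i j => ?_, x, hx, hAx⟩
  rw [← Real.norm_eq_abs]
  exact ((norm_le_pi_norm (A i) j).trans (norm_le_pi_norm A i)).trans hL

end Kernel

theorem probabilistic_null_space_property_general {n m : ℕ} (U : Set (EuclideanSpace ℝ (Fin m)))
    (hdim : lowerModMinkDim U < n) :
    ∀ᵐ A : Fin n → Fin m → ℝ, {x : EuclideanSpace ℝ (Fin m) | matVec A x = 0} ∩ (U \ {0}) = ∅ := by
  obtain ⟨V, hV, d, hdn, hVd⟩ := exists_isDimCover_forall_lowerMinkDim_lt hdim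
  have hpiece : ∀ i (k : ℕ), ∀ᵐ A : Fin n → Fin m → ℝ,
      ∀ x ∈ V i ∩ {x | 1 / ((k : ℝ) + 1) ≤ ‖x‖}, matVec A x ≠ 0 := fun i k =>
    ae_forall_matVec_ne_zero inter_subset_left (hV.1 i).2.1 (hVd i) hdn Nat.one_div_pos_of_nat
      fun _ hx => hx.2
  filter_upwards [ae_all_iff.2 fun i => ae_all_iff.2 (hpiece i)] with A hA
  refine eq_empty_of_forall_notMem fun x ⟨hAx, hxU, hx0⟩ => ?_
  obtain ⟨i, hi⟩ := mem_iUnion.1 (hV.2 hxU)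
  obtain ⟨k, hk⟩ := exists_nat_one_div_lt (norm_pos_iff.2 hx0)
  exact hA i k x ⟨hi, hk.le⟩ hAx

theorem probabilistic_null_space_property {n m : ℕ} (U : Set (EuclideanSpace ℝ (Fin m)))
    (hne : U.Nonempty) (hdim : lowerModMinkDim U < n) :
    ∀ᵐ A : Fin n → Fin m → ℝ, {x : EuclideanSpace ℝ (Fin m) | matVec A x = 0} ∩ (U \ {0}) = ∅ :=
  probabilistic_null_space_property_general U hdim
end

section
/- Uniqueness of the rectifiability parameter: If a random vector x ∈ ℝ^m is both s-rectifiable and t-rectifiable, then s = t. -/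
open MeasureTheory Filter Set Metric Bornology Matrix Pointwise
def IsRectifiableSet (s m : ℕ) (U : Set (EuclideanSpace ℝ (Fin m))) : Prop :=
  MeasurableSet U ∧
  ∃ (A : ℕ → Set (EuclideanSpace ℝ (Fin s)))
    (φ : ℕ → EuclideanSpace ℝ (Fin s) → EuclideanSpace ℝ (Fin m)),
    (∀ i, (A i).Nonempty ∧ IsBounded (A i) ∧ MeasurableSet (A i) ∧
      ∃ K : NNReal, LipschitzOnWith K (φ i) (A i)) ∧
    μH[(s : ℝ)] (U \ ⋃ i, φ i '' A i) = 0

def IsRectifiableRV (s m : ℕ) {Ω : Type*} [MeasureSpace Ω] (x : Ω → EuclideanSpace ℝ (Fin m)) : Prop :=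
  Measurable x ∧ ∃ U : Set (EuclideanSpace ℝ (Fin m)), IsRectifiableSet s m U ∧
    volume (x ⁻¹' U) = 1 ∧ Measure.map x volume ≪ μH[(s : ℝ)]

lemma hausdorff_finite_of_bounded {s : ℕ} {A : Set (EuclideanSpace ℝ (Fin s))}
    (hA : IsBounded A) : μH[(s : ℝ)] A < ⊤ := by
  have h : ((s : ℝ)) = ((Module.finrank ℝ (EuclideanSpace ℝ (Fin s)) : ℕ) : ℝ) := by
    rw [finrank_euclideanSpace_fin]
  rw [h]
  obtain ⟨r, hr⟩ := hA.subset_closedBall 0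
  calc μH[(Module.finrank ℝ (EuclideanSpace ℝ (Fin s)) : ℝ)] A
      ≤ μH[(Module.finrank ℝ (EuclideanSpace ℝ (Fin s)) : ℝ)] (closedBall 0 r) := measure_mono hr
    _ < ⊤ := (isCompact_closedBall 0 r).measure_lt_top

lemma rect_aux {s t m : ℕ} {Ω : Type*} [MeasureSpace Ω]
    [IsProbabilityMeasure (volume : Measure Ω)]
    (x : Ω → EuclideanSpace ℝ (Fin m))
    (hs : IsRectifiableRV s m x) (ht : Measure.map x volume ≪ μH[(t : ℝ)])
    (hst : s < t) : False := by
  obtain ⟨hx, U, ⟨hUm, A, φ, hAi, hcov⟩, hU1, habs⟩ := hs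
  set ν := Measure.map x volume
  have hstR : (s : ℝ) < (t : ℝ) := by exact_mod_cast hst
  have hzero : ∀ i, μH[(t : ℝ)] (φ i '' A i) = 0 := by
    intro i
    obtain ⟨-, hb, -, K, hK⟩ := hAi i
    have hfin : μH[(s : ℝ)] (φ i '' A i) < ⊤ := by
      calc μH[(s : ℝ)] (φ i '' A i) ≤ (K : ENNReal) ^ (s : ℝ) * μH[(s : ℝ)] (A i) :=
            hK.hausdorffMeasure_image_le (Nat.cast_nonneg s)
        _ < ⊤ := ENNReal.mul_lt_top (ENNReal.rpow_lt_top_of_nonneg (Nat.cast_nonneg s)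
            ENNReal.coe_ne_top) (hausdorff_finite_of_bounded hb)
    rcases Measure.hausdorffMeasure_zero_or_top hstR (φ i '' A i) with h | h
    · exact h
    · exact absurd h hfin.ne
  have hU : μH[(t : ℝ)] (⋃ i, φ i '' A i) = 0 := measure_iUnion_null hzero
  have h1 : ν (⋃ i, φ i '' A i) = 0 := ht (measure_mono_null (subset_refl _) hU)
  have h2 : ν (U \ ⋃ i, φ i '' A i) = 0 := habs hcov
  have h3 : ν U = 1 := by
    rw [Measure.map_apply hx hUm]; exact hU1
  have : ν U ≤ ν (⋃ i, φ i '' A i) + ν (U \ ⋃ i, φ i '' A i) := by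
    refine (measure_mono (fun y hy => ?_ :
        U ⊆ (⋃ i, φ i '' A i) ∪ (U \ ⋃ i, φ i '' A i))).trans (measure_union_le _ _)
    by_cases hyc : y ∈ ⋃ i, φ i '' A i
    · exact Or.inl hyc
    · exact Or.inr ⟨hy, hyc⟩
  rw [h1, h2, h3] at this
  simp at this

theorem rectifiability_parameter_unique {s t m : ℕ} {Ω : Type*} [MeasureSpace Ω]
    [IsProbabilityMeasure (volume : Measure Ω)]
    (x : Ω → EuclideanSpace ℝ (Fin m))
    (hs : IsRectifiableRV s m x) (ht : IsRectifiableRV t m x) : s = t := by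
  by_contra h
  rcases Nat.lt_or_ge s t with hlt | hge
  · exact rect_aux x hs ht.2.choose_spec.2.2 hlt
  · exact rect_aux x ht hs.2.choose_spec.2.2 (lt_of_le_of_ne hge (Ne.symm h))
end
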